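/- If the monic cubic $x^3 + ax^2 + bx + c$ has three real roots $x_3 \le x_2 \le x_1$, then $x_1 - x_3 \le \frac{\sqrt{12}}{3}\sqrt{a^2 - 3b}$, with equality exactly for the balanced cubic (when $x_2$ is the midpoint of $x_1$ and $x_3$). -/

import Mathlib

/-! With `d = x₁ - x₃` and `m = x₁ + x₃ - 2 x₂`, Vieta's formulas give
`a² - 3b = (3 d² + m²) / 4`, so the bound `√12 / 3 · √(a² - 3b) = √(d² + m² / 3)` is at
least `d`, with equality exactly when `m = 0`. -/

lemma four_mul_sq_sum_sub_three_mul_sum_mul {R : Type*} [CommRing R] (x₁ x₂ x₃ : R) :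
    4 * ((x₁ + x₂ + x₃) ^ 2 - 3 * (x₁ * x₂ + x₁ * x₃ + x₂ * x₃)) =
      3 * (x₁ - x₃) ^ 2 + (x₁ + x₃ - 2 * x₂) ^ 2 := by
  ring

lemma sqrt_twelve_div_three_mul_sqrt (y : ℝ) : √12 / 3 * √y = √(4 / 3 * y) := by
  rw [Real.sqrt_mul (by norm_num)]
  congr 1
  rw [eq_comm, Real.sqrt_eq_iff_mul_self_eq_of_pos (by positivity), div_mul_div_comm,
    Real.mul_self_sqrt (by norm_num)]
  norm_num

namespace Real

lemma le_sqrt_sq_add {d e : ℝ} (he : 0 ≤ e) : d ≤ √(d ^ 2 + e) :=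
  le_sqrt_of_sq_le (by linarith)

lemma eq_sqrt_sq_add_iff {d e : ℝ} (hd : 0 ≤ d) (he : 0 ≤ e) : d = √(d ^ 2 + e) ↔ e = 0 := by
  rw [eq_comm, sqrt_eq_iff_eq_sq (by positivity) hd]
  constructor <;> intro h <;> linarith

end Real

theorem stmt_12 (a b x₁ x₂ x₃ : ℝ)
    (hord : x₃ ≤ x₂ ∧ x₂ ≤ x₁)
    (hsum : x₁ + x₂ + x₃ = -a)
    (hprod : x₁*x₂ + x₁*x₃ + x₂*x₃ = b) :
    x₁ - x₃ ≤ (Real.sqrt 12 / 3) * Real.sqrt (a^2 - 3*b) ∧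
    (x₁ - x₃ = (Real.sqrt 12 / 3) * Real.sqrt (a^2 - 3*b) ↔ x₂ = (x₁ + x₃)/2) := by
  have hgap : 4 / 3 * (a ^ 2 - 3 * b) = (x₁ - x₃) ^ 2 + (x₁ + x₃ - 2 * x₂) ^ 2 / 3 := by
    have h := four_mul_sq_sum_sub_three_mul_sum_mul x₁ x₂ x₃
    rw [hsum, hprod, neg_sq] at h
    linear_combination h / 3
  rw [sqrt_twelve_div_three_mul_sqrt, hgap]
  have hd : 0 ≤ x₁ - x₃ := by linarith [hord.1, hord.2]
  have he : 0 ≤ (x₁ + x₃ - 2 * x₂) ^ 2 / 3 := by positivity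
  refine ⟨Real.le_sqrt_sq_add he, (Real.eq_sqrt_sq_add_iff hd he).trans ?_⟩
  rw [div_eq_zero_iff, or_iff_left three_ne_zero, sq_eq_zero_iff]
  constructor <;> intro h <;> linarith
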